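/- For every integer n ≥ 2, the derivative at x = 1 of the polynomial H(x) = 4n·x + 4·Σ_{k=2}^{n−1}(n−k+2)x^{3k−2} + 4·Σ_{k=1}^{n−1}(2n−2k)x^{3k−1} + 4·Σ_{k=1}^{n−1}(n−k)x^{3k} + 4x^{3n−2} equals 8n³ + 4n² − 16n + 4. -/

import Mathlib

/-! At `x = 1` the derivative of `∑ cᵢ x^{eᵢ}` is the weighted exponent sum `∑ cᵢ eᵢ`, so the
claim reduces to closed forms for three sums `∑ₖ (coefficient) * (exponent)`, one for each
exponent family `3k - 2`, `3k - 1`, `3k`. -/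

open Finset

theorem hasDerivAt_sum_mul_pow_at_one {𝕜 ι : Type*} [NontriviallyNormedField 𝕜]
    (s : Finset ι) (c : ι → 𝕜) (e : ι → ℕ) :
    HasDerivAt (fun x : 𝕜 => ∑ i ∈ s, c i * x ^ e i) (∑ i ∈ s, c i * e i) 1 := by
  simpa using
    HasDerivAt.fun_sum (u := s) fun i _ => (hasDerivAt_pow (e i) (1 : 𝕜)).const_mul (c i)

theorem sum_coeff_mul_exponent_three_mul_sub_two (a : ℝ) {m : ℕ} (hm : 1 ≤ m) :
    ∑ k ∈ Icc 2 m, (a - k + 2) * ((3 * k - 2 : ℕ) : ℝ)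
      = (a + 2) * (3 * (m : ℝ) ^ 2 - m - 2) / 2 - m * (m + 1) * (2 * m - 1) / 2 + 1 := by
  induction m, hm using Nat.le_induction with
  | base => norm_num
  | succ m hm ih =>
    rw [sum_Icc_succ_top (by omega), ih, show 3 * (m + 1) - 2 = 3 * m + 1 by omega]
    push_cast
    ring

theorem sum_coeff_mul_exponent_three_mul_sub_one (a : ℝ) (m : ℕ) :
    ∑ k ∈ Icc 1 m, (2 * a - 2 * k) * ((3 * k - 1 : ℕ) : ℝ)
      = a * m * (3 * m + 1) - 2 * (m : ℝ) ^ 2 * (m + 1) := by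
  induction m with
  | zero => simp
  | succ m ih =>
    rw [sum_Icc_succ_top (by omega), ih, show 3 * (m + 1) - 1 = 3 * m + 2 by omega]
    push_cast
    ring

theorem sum_coeff_mul_exponent_three_mul (a : ℝ) (m : ℕ) :
    ∑ k ∈ Icc 1 m, (a - k) * ((3 * k : ℕ) : ℝ)
      = 3 * a * m * (m + 1) / 2 - m * (m + 1) * (2 * m + 1) / 2 := by
  induction m with
  | zero => simp
  | succ m ih =>
    rw [sum_Icc_succ_top (by omega), ih]
    push_cast
    ring

theorem stmt_11 (n : ℕ) (hn : 2 ≤ n) :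
    deriv (fun x : ℝ => 4 * (n : ℝ) * x
      + 4 * ∑ k ∈ Finset.Icc 2 (n - 1), ((n : ℝ) - k + 2) * x ^ (3 * k - 2)
      + 4 * ∑ k ∈ Finset.Icc 1 (n - 1), (2 * (n : ℝ) - 2 * k) * x ^ (3 * k - 1)
      + 4 * ∑ k ∈ Finset.Icc 1 (n - 1), ((n : ℝ) - k) * x ^ (3 * k)
      + 4 * x ^ (3 * n - 2)) 1
    = 8 * (n : ℝ) ^ 3 + 4 * (n : ℝ) ^ 2 - 16 * (n : ℝ) + 4 := by
  refine (HasDerivAt.deriv (f' := ?d) ?hd).trans ?_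
  case hd =>
    exact (((((hasDerivAt_id' (1 : ℝ)).const_mul _).add
        ((hasDerivAt_sum_mul_pow_at_one _ _ _).const_mul 4)).add
        ((hasDerivAt_sum_mul_pow_at_one _ _ _).const_mul 4)).add
        ((hasDerivAt_sum_mul_pow_at_one _ _ _).const_mul 4)).add
        ((hasDerivAt_pow _ (1 : ℝ)).const_mul 4)
  rw [sum_coeff_mul_exponent_three_mul_sub_two _ (by omega),
    sum_coeff_mul_exponent_three_mul_sub_one, sum_coeff_mul_exponent_three_mul,
    Nat.cast_sub (by omega : 1 ≤ n), Nat.cast_sub (by omega : 2 ≤ 3 * n)]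
  push_cast
  ring
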